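/- Let ρ : ℝ × ℝ → ℝ be twice continuously differentiable at (n₀, s₀) with n₀ > 0, and set T = (1/n₀)·∂ρ/∂s(n₀,s₀). Define ψ(σ, n) = ρ(n, σ/n) on the region {(σ,n) : n > 0}. Then the Hessian of ψ at the point (n₀·s₀, n₀) is positive definite if and only if both of the following inequalities hold, with all partial derivatives of ρ evaluated at (n₀,s₀): (1) ∂²ρ/∂n² · ∂²ρ/∂s² − (∂²ρ/∂n∂s − T)² > 0, and (2) n₀²·∂²ρ/∂n² + (1 + s₀²)·∂²ρ/∂s² − 2·s₀·n₀·(∂²ρ/∂n∂s − T) > 0. -/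

import Mathlib

/-!
Near `(n₀ s₀, n₀)` we have `ψ = ρ ∘ g` with `g (σ, n) = (n, σ / n)`, so by the second-order chain
rule `D²ψ[v, v] = D²ρ[Dg v, Dg v] + Dρ[D²g[v, v]]`. With `w = (v₁ - s₀ v₂) / n₀` one has
`Dg v = (v₂, w)`, and the curvature term `Dρ[D²g[v, v]] = -2 T v₂ w` is what shifts the mixed
derivative `∂²ρ/∂n∂s` to `∂²ρ/∂n∂s - T`. After multiplication by `n₀²` the Hessian of `ψ` is a
binary quadratic form whose determinant is `n₀²` times the first expression and whose trace is the
second one, and a binary quadratic form is positive definite iff its determinant and trace are.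
-/

open ContinuousLinearMap Filter Topology

section

variable {𝕜 E F G : Type*} [NontriviallyNormedField 𝕜]
  [NormedAddCommGroup E] [NormedSpace 𝕜 E] [NormedAddCommGroup F] [NormedSpace 𝕜 F]
  [NormedAddCommGroup G] [NormedSpace 𝕜 G]

theorem fderiv_fderiv_comp_apply {f : F → G} {g : E → F} {g' : E → E →L[𝕜] F}
    {g'' : E →L[𝕜] E →L[𝕜] F} {x : E} (hf : ContDiffAt 𝕜 2 f (g x))
    (hg : ∀ᶠ y in 𝓝 x, HasFDerivAt g (g' y) y) (hg' : HasFDerivAt g' g'' x) (v w : E) :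
    fderiv 𝕜 (fderiv 𝕜 (f ∘ g)) x v w =
      fderiv 𝕜 (fderiv 𝕜 f) (g x) (g' x v) (g' x w) + fderiv 𝕜 f (g x) (g'' v w) := by
  have hgx : HasFDerivAt g (g' x) x := hg.self_of_nhds
  have hf_diff : ∀ᶠ y in 𝓝 x, DifferentiableAt 𝕜 f (g y) :=
    hgx.continuousAt.eventually ((hf.eventually (by simp)).mono
      fun z hz ↦ hz.differentiableAt two_ne_zero)
  have hf' : HasFDerivAt (fderiv 𝕜 f) (fderiv 𝕜 (fderiv 𝕜 f) (g x)) (g x) :=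
    ((hf.fderiv_right (m := 1) le_rfl).differentiableAt one_ne_zero).hasFDerivAt
  have hfg : fderiv 𝕜 (f ∘ g) =ᶠ[𝓝 x] fun y ↦ (fderiv 𝕜 f (g y)).comp (g' y) := by
    filter_upwards [hg, hf_diff] with y hgy hfy
    exact (hfy.hasFDerivAt.comp y hgy).fderiv
  have hcomp : HasFDerivAt (fun y ↦ (fderiv 𝕜 f (g y)).comp (g' y)) _ x :=
    (hf'.comp x hgx).clm_comp hg'
  rw [hfg.fderiv_eq, hcomp.fderiv]
  simp [add_comm]

theorem ContinuousLinearMap.apply_mk_apply_mk_of_symm (B : 𝕜 × 𝕜 →L[𝕜] 𝕜 × 𝕜 →L[𝕜] G)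
    (hB : B (0, 1) (1, 0) = B (1, 0) (0, 1)) (a b : 𝕜) :
    B (a, b) (a, b) = a ^ 2 • B (1, 0) (1, 0) + (2 * a * b) • B (1, 0) (0, 1)
      + b ^ 2 • B (0, 1) (0, 1) := by
  have hab : ((a, b) : 𝕜 × 𝕜) = a • (1, 0) + b • (0, 1) := by simp
  rw [hab]
  simp only [map_add, map_smul, add_apply, smul_apply, hB]
  module

end

theorem quadratic_pos_iff (a b c : ℝ) :
    (∀ v : ℝ × ℝ, v ≠ 0 → 0 < a * v.1 ^ 2 + 2 * b * v.1 * v.2 + c * v.2 ^ 2) ↔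
      0 < a * c - b ^ 2 ∧ 0 < a + c := by
  constructor
  · intro h
    have ha : 0 < a := by simpa using h (1, 0) (by simp)
    have hc : 0 < c := by simpa using h (0, 1) (by simp)
    have hdet : 0 < a * (a * c - b ^ 2) := by
      have := h (b, -a) (by simp [ha.ne'])
      nlinarith
    exact ⟨pos_of_mul_pos_right hdet ha.le, by linarith⟩
  · rintro ⟨hdet, htr⟩ ⟨x, y⟩ hv
    have ha : 0 < a := by nlinarith [sq_nonneg b]
    suffices 0 < a * (a * x ^ 2 + 2 * b * x * y + c * y ^ 2) from pos_of_mul_pos_right this ha.le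
    have hsq : a * (a * x ^ 2 + 2 * b * x * y + c * y ^ 2)
        = (a * x + b * y) ^ 2 + (a * c - b ^ 2) * y ^ 2 := by ring
    rw [hsq]
    rcases eq_or_ne y 0 with rfl | hy
    · have hx : x ≠ 0 := by simpa using hv
      simpa using (by positivity : 0 < (a * x) ^ 2)
    · have : 0 < (a * c - b ^ 2) * y ^ 2 := by positivity
      positivity

theorem hasFDerivAt_fst_div_snd {p : ℝ × ℝ} (hp : p.2 ≠ 0) :
    HasFDerivAt (fun y : ℝ × ℝ ↦ y.1 / y.2)
      (p.2⁻¹ • fst ℝ ℝ ℝ - (p.1 * (p.2 ^ 2)⁻¹) • snd ℝ ℝ ℝ) p := by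
  have h : HasFDerivAt (fun y : ℝ × ℝ ↦ y.1 * y.2⁻¹) _ p := (hasFDerivAt_fst (p := p)).mul
    ((hasDerivAt_inv hp).comp_hasFDerivAt p (hasFDerivAt_snd (𝕜 := ℝ) (p := p)))
  simp only [div_eq_mul_inv]
  refine h.congr_fderiv ?_
  ext <;> simp

noncomputable def toPerParticle (p : ℝ × ℝ) : ℝ × ℝ := (p.2, p.1 / p.2)

noncomputable def toPerParticleDeriv (p : ℝ × ℝ) : ℝ × ℝ →L[ℝ] ℝ × ℝ :=
  (inl ℝ ℝ ℝ).comp (snd ℝ ℝ ℝ)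
    + (inr ℝ ℝ ℝ).comp (p.2⁻¹ • fst ℝ ℝ ℝ - (p.1 * (p.2 ^ 2)⁻¹) • snd ℝ ℝ ℝ)

theorem hasFDerivAt_toPerParticle {p : ℝ × ℝ} (hp : p.2 ≠ 0) :
    HasFDerivAt toPerParticle (toPerParticleDeriv p) p := by
  refine (hasFDerivAt_snd.prodMk (hasFDerivAt_fst_div_snd hp)).congr_fderiv ?_
  ext <;> simp [toPerParticleDeriv]

theorem fderiv_fderiv_comp_toPerParticle_apply_self {ρ : ℝ × ℝ → ℝ} {n s : ℝ} (hn : n ≠ 0)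
    (hρ : ContDiffAt ℝ 2 ρ (n, s)) (v : ℝ × ℝ) :
    fderiv ℝ (fderiv ℝ (ρ ∘ toPerParticle)) (n * s, n) v v =
      fderiv ℝ (fderiv ℝ ρ) (n, s) (v.2, (v.1 - s * v.2) / n) (v.2, (v.1 - s * v.2) / n)
        - 2 * v.2 * ((v.1 - s * v.2) / n) * (fderiv ℝ ρ (n, s) (0, 1) / n) := by
  set p : ℝ × ℝ := (n * s, n)
  have hp : toPerParticle p = (n, s) := by simp [p, toPerParticle, hn]
  have hg : ∀ᶠ y in 𝓝 p, HasFDerivAt toPerParticle (toPerParticleDeriv y) y :=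
    (continuous_snd.isOpen_preimage _ isOpen_ne).eventually_mem (show p.2 ≠ 0 from hn)
      |>.mono fun y hy ↦ hasFDerivAt_toPerParticle hy
  have hinv : HasFDerivAt (fun y : ℝ × ℝ ↦ y.2⁻¹) _ p :=
    (hasDerivAt_inv hn).comp_hasFDerivAt p (hasFDerivAt_snd (𝕜 := ℝ) (p := p))
  have hquot : HasFDerivAt (fun y : ℝ × ℝ ↦ y.1 * (y.2 ^ 2)⁻¹) _ p :=
    (hasFDerivAt_fst (p := p)).mul ((hasDerivAt_inv (pow_ne_zero 2 hn)).comp_hasFDerivAt p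
      ((hasFDerivAt_snd (𝕜 := ℝ) (p := p)).pow 2))
  have hg' : HasFDerivAt toPerParticleDeriv _ p :=
    ((hasFDerivAt_const (inr ℝ ℝ ℝ) p).clm_comp
      ((hinv.smul_const (fst ℝ ℝ ℝ)).sub (hquot.smul_const (snd ℝ ℝ ℝ)))).const_add _
  rw [fderiv_fderiv_comp_apply (hp ▸ hρ) hg hg', hp]
  have hw : n⁻¹ * v.1 - n * s * (n ^ 2)⁻¹ * v.2 = (v.1 - s * v.2) / n := by
    field_simp
  have h01 (t : ℝ) : fderiv ℝ ρ (n, s) (0, t) = t * fderiv ℝ ρ (n, s) (0, 1) := by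
    simpa using (fderiv ℝ ρ (n, s)).map_smul t ((0 : ℝ), (1 : ℝ))
  simp only [toPerParticleDeriv, comp_sub, comp_smulₛₗ, map_inv₀, Real.ringHom_apply, add_apply,
    comp_apply, coe_snd', inl_apply, sub_apply, smul_apply, coe_fst', inr_apply, Prod.smul_mk,
    smul_eq_mul, mul_zero, Prod.mk_sub_mk, sub_self, Prod.mk_add_mk, add_zero, zero_add, neg_smul,
    Nat.add_one_sub_one, pow_one, nsmul_eq_mul, Nat.cast_ofNat, smul_neg, Pi.sub_apply, map_sub,
    map_smul, comp_zero, smulRight_apply, neg_apply, compL_apply, comp_neg, Prod.neg_mk, neg_zero, p]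
  rw [hw, h01]
  field_simp
  ring

/-- Positive definiteness of the Hessian of the energy density `ψ(σ,n) = ρ(n, σ/n)`
(energy density as a function of entropy density `σ = s n` and particle density `n`)
is equivalent to the two local thermodynamic stability inequalities (eq. (16) of the
paper). -/
theorem local_thermodynamic_stability_iff
    (ρ : ℝ × ℝ → ℝ) (n₀ s₀ : ℝ) (hn₀ : 0 < n₀)
    (hρ : ContDiffAt ℝ 2 ρ (n₀, s₀))
    (T : ℝ) (hT : T = (1 / n₀) * fderiv ℝ ρ (n₀, s₀) (0, 1))
    (ψ : ℝ × ℝ → ℝ) (hψ : ∀ σ n : ℝ, 0 < n → ψ (σ, n) = ρ (n, σ / n)) :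
    (∀ v : ℝ × ℝ, v ≠ 0 → 0 < iteratedFDeriv ℝ 2 ψ (n₀ * s₀, n₀) ![v, v]) ↔
      (0 < iteratedFDeriv ℝ 2 ρ (n₀, s₀) ![(1, 0), (1, 0)]
              * iteratedFDeriv ℝ 2 ρ (n₀, s₀) ![(0, 1), (0, 1)]
            - (iteratedFDeriv ℝ 2 ρ (n₀, s₀) ![(1, 0), (0, 1)] - T) ^ 2
        ∧ 0 < n₀ ^ 2 * iteratedFDeriv ℝ 2 ρ (n₀, s₀) ![(1, 0), (1, 0)]
            + (1 + s₀ ^ 2) * iteratedFDeriv ℝ 2 ρ (n₀, s₀) ![(0, 1), (0, 1)]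
            - 2 * s₀ * n₀ * (iteratedFDeriv ℝ 2 ρ (n₀, s₀) ![(1, 0), (0, 1)] - T)) := by
  simp only [iteratedFDeriv_two_apply, Matrix.cons_val_zero, Matrix.cons_val_one]
  set A := fderiv ℝ (fderiv ℝ ρ) (n₀, s₀) (1, 0) (1, 0)
  set B := fderiv ℝ (fderiv ℝ ρ) (n₀, s₀) (1, 0) (0, 1)
  set C := fderiv ℝ (fderiv ℝ ρ) (n₀, s₀) (0, 1) (0, 1)
  have hψρ : ψ =ᶠ[𝓝 (n₀ * s₀, n₀)] ρ ∘ toPerParticle :=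
    (continuous_snd.isOpen_preimage _ isOpen_Ioi).eventually_mem (show 0 < n₀ from hn₀)
      |>.mono fun y hy ↦ hψ y.1 y.2 hy
  have hQ (v : ℝ × ℝ) : n₀ ^ 2 * fderiv ℝ (fderiv ℝ ψ) (n₀ * s₀, n₀) v v =
      C * v.1 ^ 2 + 2 * (n₀ * (B - T) - s₀ * C) * v.1 * v.2
        + (n₀ ^ 2 * A - 2 * n₀ * s₀ * (B - T) + s₀ ^ 2 * C) * v.2 ^ 2 := by
    rw [hψρ.fderiv.fderiv_eq, fderiv_fderiv_comp_toPerParticle_apply_self hn₀.ne' hρ,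
      apply_mk_apply_mk_of_symm _ (hρ.isSymmSndFDerivAt (by simp) _ _), hT]
    simp only [A, B, C, smul_eq_mul]
    field_simp
    ring
  calc (∀ v : ℝ × ℝ, v ≠ 0 → 0 < fderiv ℝ (fderiv ℝ ψ) (n₀ * s₀, n₀) v v)
      ↔ ∀ v : ℝ × ℝ, v ≠ 0 → 0 < C * v.1 ^ 2 + 2 * (n₀ * (B - T) - s₀ * C) * v.1 * v.2
        + (n₀ ^ 2 * A - 2 * n₀ * s₀ * (B - T) + s₀ ^ 2 * C) * v.2 ^ 2 :=
        forall₂_congr fun v _ ↦ by rw [← hQ, mul_pos_iff_of_pos_left (by positivity)]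
    _ ↔ 0 < n₀ ^ 2 * (A * C - (B - T) ^ 2)
          ∧ 0 < n₀ ^ 2 * A + (1 + s₀ ^ 2) * C - 2 * s₀ * n₀ * (B - T) := by
        rw [quadratic_pos_iff]; ring_nf
    _ ↔ _ := by rw [mul_pos_iff_of_pos_left (by positivity)]
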